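/- Let T be an increasing gapless tableau of two-row shape λ with maximum entry m, and suppose i is a non-attacking descent of T, i.e., i occurs exactly once in row 1, i+1 occurs exactly once in row 2, and the column of i is strictly greater than the column of i+1. Then Φ_{λ;m}(s_i · T) = s_i · Φ_{λ;m}(T), where s_i · T swaps the entries i and i+1. -/

import Mathlib

/-- A two-row tableau, given by its two rows (lists of entries). -/
structure TwoRowT where
  r1 : List ℕ
  r2 : List ℕ
deriving DecidableEq

/-- A "hook-plus" tableau: two rows together with the part of the first
column lying below the second row. -/
structure HookT where
  r1 : List ℕ
  r2 : List ℕ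
  col : List ℕ
deriving DecidableEq

/-- `T` is an increasing gapless tableau of shape `(l1,l2)` with maximum entry `m`. -/
def IsIGLT (l1 l2 m : ℕ) (T : TwoRowT) : Prop :=
  T.r1.length = l1 ∧ T.r2.length = l2 ∧
  T.r1.Chain' (· < ·) ∧ T.r2.Chain' (· < ·) ∧
  (∀ j, j < l2 → T.r1.getD j 0 < T.r2.getD j 0) ∧
  (∀ x ∈ T.r1, 1 ≤ x ∧ x ≤ m) ∧ (∀ x ∈ T.r2, 1 ≤ x ∧ x ≤ m) ∧
  (∀ k, 1 ≤ k → k ≤ m → k ∈ T.r1 ∨ k ∈ T.r2) ∧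
  (m ∈ T.r1 ∨ m ∈ T.r2)

/-- The set `A` of repeated entries of a two-row increasing tableau. -/
def setA (T : TwoRowT) : List ℕ := T.r1.filter (fun x => x ∈ T.r2)

/-- The set `B`: entries of the second row immediately to the right of an element of `A`. -/
def setB (T : TwoRowT) : List ℕ :=
  (T.r2.zip T.r2.tail).filterMap (fun p => if p.1 ∈ setA T then some p.2 else none)

/-- Pechenik's map `Φ_{λ;m}`. -/
def Phi (T : TwoRowT) : HookT :=
  ⟨T.r1.filter (fun x => x ∉ setA T),
   T.r2.filter (fun x => x ∉ setB T),
   List.insertionSort (· ≤ ·) (setB T)⟩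

/-- The shape of a hook-plus tableau, as a list. -/
def shapeOf (S : HookT) : List ℕ :=
  S.r1.length :: S.r2.length :: List.replicate S.col.length 1

/-- `S` is a standard Young tableau with entries `1,...,m`. -/
def IsSYTHook (m : ℕ) (S : HookT) : Prop :=
  S.r1.Chain' (· < ·) ∧ S.r2.Chain' (· < ·) ∧
  ((S.r1.take 1) ++ (S.r2.take 1) ++ S.col).Chain' (· < ·) ∧
  (∀ j, j < S.r2.length → S.r1.getD j 0 < S.r2.getD j 0) ∧
  S.r2.length ≤ S.r1.length ∧
  (S.col ≠ [] → S.r2 ≠ []) ∧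
  (S.r1 ++ S.r2 ++ S.col).Perm (List.range' 1 m)

/-- The shape `λ_m^{(1)} = (λ₁-k, λ₂-k, 1^k)`. -/
def lamShape1 (l1 l2 k : ℕ) : List ℕ := [l1 - k, l2 - k] ++ List.replicate k 1

/-- The shape `λ_m^{(2)} = (λ₁-k, λ₂-k+1, 1^(k-1))`. -/
def lamShape2 (l1 l2 k : ℕ) : List ℕ := [l1 - k, l2 - k + 1] ++ List.replicate (k - 1) 1

/-- The set `Par(λ;m)` of shapes occurring in Pechenik's expansion. -/
def ParSet (l1 l2 n m : ℕ) : Set (List ℕ) :=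
  {s | (n - m + 1 < l2 ∨ m = n) ∧ s = lamShape1 l1 l2 (n - m)} ∪
  {s | l1 ≠ l2 ∧ m < n ∧ n - m < l2 ∧ s = lamShape2 l1 l2 (n - m)}

/-- Row index (1-based) of the entry `x` in a hook-plus tableau. -/
def rowIdx (S : HookT) (x : ℕ) : ℕ :=
  if x ∈ S.r1 then 1 else if x ∈ S.r2 then 2 else 3 + S.col.idxOf x

/-- Column index (0-based) of the entry `x` in a hook-plus tableau. -/
def colIdx (S : HookT) (x : ℕ) : ℕ :=
  if x ∈ S.r1 then S.r1.idxOf x else if x ∈ S.r2 then S.r2.idxOf x else 0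

/-- Descent set of an increasing gapless two-row tableau with max entry `m`. -/
def desT (m : ℕ) (T : TwoRowT) : Finset ℕ :=
  (Finset.Ioo 0 m).filter (fun i => i ∈ T.r1 ∧ i + 1 ∈ T.r2)

/-- Descent set of a standard Young tableau with entries `1,...,m`. -/
def desS (m : ℕ) (S : HookT) : Finset ℕ :=
  (Finset.Ioo 0 m).filter (fun i => rowIdx S i < rowIdx S (i + 1))

def swapVal (i j x : ℕ) : ℕ := if x = i then j else if x = j then i else x

/-- Swap the entries `i` and `j` in a two-row tableau. -/
def twoRowSwap (i j : ℕ) (T : TwoRowT) : TwoRowT :=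
  ⟨T.r1.map (swapVal i j), T.r2.map (swapVal i j)⟩

/-- Swap the entries `i` and `j` in a hook-plus tableau. -/
def hookSwap (i j : ℕ) (S : HookT) : HookT :=
  ⟨S.r1.map (swapVal i j), S.r2.map (swapVal i j), S.col.map (swapVal i j)⟩

/-- Searles' 0-Hecke operator `π_i` on a standard Young tableau:
`some S` means the result is `S`, `none` means the result is `0`. -/
def searlesStep (i : ℕ) (S : HookT) : Option HookT :=
  if colIdx S i < colIdx S (i + 1) then some S
  else if colIdx S i = colIdx S (i + 1) then none
  else some (hookSwap i (i + 1) S)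

/-- Kim–Yoo's 0-Hecke operator `π_i` on an increasing gapless tableau. -/
def kyStep (i : ℕ) (T : TwoRowT) : Option TwoRowT :=
  if i ∈ T.r1 ∧ i + 1 ∈ T.r2 then
    if i ∉ T.r2 ∧ i + 1 ∉ T.r1 ∧ T.r2.idxOf (i + 1) < T.r1.idxOf i then
      some (twoRowSwap i (i + 1) T)
    else none
  else some T

/-- Searles' operator, extended linearly. -/
noncomputable def piOp (i : ℕ) : (HookT →₀ ℂ) →ₗ[ℂ] (HookT →₀ ℂ) :=
  Finsupp.lsum ℂ fun S => (searlesStep i S).elim 0 fun S' => Finsupp.lsingle S'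

/-- Kim–Yoo's operator, extended linearly. -/
noncomputable def kyOp (i : ℕ) : (TwoRowT →₀ ℂ) →ₗ[ℂ] (TwoRowT →₀ ℂ) :=
  Finsupp.lsum ℂ fun T => (kyStep i T).elim 0 fun T' => Finsupp.lsingle T'

/-- The data of the boxes occupied by repeated entries: for each repeated entry `i`,
the pair of (0-based) columns of its occurrence in row 1 and in row 2.
For two-row shapes this datum determines the pair `(Γ_i(T), T⁻¹(i))`. -/
def repPairs (T : TwoRowT) : Set (ℕ × ℕ) :=
  {p | ∃ i, i ∈ T.r1 ∧ i ∈ T.r2 ∧ p = (T.r1.idxOf i, T.r2.idxOf i)}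

/-- The Kim–Yoo equivalence `∼_{λ;m}` on two-row increasing gapless tableaux. -/
def equivKY (T1 T2 : TwoRowT) : Prop := repPairs T1 = repPairs T2

/-- The equivalence class of `T` in `IGLT(λ)_m` under `∼_{λ;m}`. -/
def classOf (l1 l2 m : ℕ) (T : TwoRowT) : Set TwoRowT :=
  {T' | IsIGLT l1 l2 m T' ∧ equivKY T T'}

/-- The columns (0-based) of the bottommost boxes of the repeated entries,
listed in increasing order of the repeated entries. -/
def botCols (T : TwoRowT) : List ℕ :=
  (T.r1.filter (fun x => x ∈ T.r2)).map (fun i => T.r2.idxOf i)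

/-- The partial order `⪯` on equivalence classes. -/
def classLE (C1 C2 : Set TwoRowT) : Prop :=
  ∃ T1 ∈ C1, ∃ T2 ∈ C2, List.Forall₂ (· ≤ ·) (botCols T1) (botCols T2)

open Classical in
/-- The fundamental quasisymmetric function `F_{comp(D)}` of degree `m`,
as a formal power series in the variables `x_0, x_1, x_2, ...`. -/
noncomputable def Fqs (m : ℕ) (D : Finset ℕ) : MvPowerSeries ℕ ℚ :=
  fun e =>
    if ∃ f : Fin m → ℕ, Monotone f ∧
        (∀ j : ℕ, ∀ hj : j < m, 0 < j → j ∈ D → f ⟨j - 1, by omega⟩ < f ⟨j, hj⟩) ∧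
        (∀ i : ℕ, e i = Nat.card {j : Fin m // f j = i})
    then 1 else 0

/-- The Schur function `s_μ = Σ_{S ∈ SYT(μ)} F_{comp(Des(S))}` (for shapes
representable as hook-plus tableaux). -/
noncomputable def schurF (m : ℕ) (μ : List ℕ) : MvPowerSeries ℕ ℚ :=
  ∑ᶠ S ∈ {S : HookT | IsSYTHook m S ∧ shapeOf S = μ}, Fqs m (desS m S)


private lemma swapVal_invol (i j : ℕ) : Function.Involutive (swapVal i j) := by
  intro x
  unfold swapVal
  split_ifs <;> omega

private lemma swapVal_inj (i j : ℕ) : Function.Injective (swapVal i j) :=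
  (swapVal_invol i j).injective

private lemma filterMap_congr_mem {α β : Type*} {f g : α → Option β} :
    ∀ {l : List α}, (∀ a ∈ l, f a = g a) → l.filterMap f = l.filterMap g := by
  intro l
  induction l with
  | nil => intro _; rfl
  | cons a l ih =>
    intro h
    simp only [List.filterMap_cons, h a (by simp), ih (fun x hx => h x (by simp [hx]))]

private lemma mem_setB_sub {T : TwoRowT} {x : ℕ} (hx : x ∈ setB T) : x ∈ T.r2 := by
  simp only [setB, List.mem_filterMap] at hx
  obtain ⟨p, hp, hpx⟩ := hx
  obtain ⟨p1, p2⟩ := p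
  by_cases hcond : p1 ∈ setA T
  · rw [if_pos hcond] at hpx
    cases hpx
    exact List.mem_of_mem_tail (List.of_mem_zip hp).2
  · rw [if_neg hcond] at hpx
    exact absurd hpx (by simp)

/-- If `i` is a non-attacking descent of `T ∈ IGLT(λ)_m` (i.e. `i` occurs exactly once,
in row 1, `i+1` occurs exactly once, in row 2, and the column of `i` is strictly greater
than the column of `i+1`), then `Φ_{λ;m}(s_i · T) = s_i · Φ_{λ;m}(T)`. -/
theorem stmt_10 (l1 l2 n m : ℕ) (h2 : 1 ≤ l2) (h12 : l2 ≤ l1) (hn : n = l1 + l2)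
    (T : TwoRowT) (hT : IsIGLT l1 l2 m T)
    (i : ℕ) (hi1 : 1 ≤ i) (hi2 : i < m)
    (ha : i ∈ T.r1) (hb : i ∉ T.r2) (hc : i + 1 ∈ T.r2) (hd : i + 1 ∉ T.r1)
    (hcol : T.r2.idxOf (i + 1) < T.r1.idxOf i) :
    Phi (twoRowSwap i (i + 1) T) = hookSwap i (i + 1) (Phi T) := by
  set s := swapVal i (i + 1) with hs
  have hsi : s i = i + 1 := by simp [hs, swapVal]
  have hsi1 : s (i + 1) = i := by simp [hs, swapVal]
  have hsne : ∀ x, x ≠ i → x ≠ i + 1 → s x = x := by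
    intro x h1 h2; simp [hs, swapVal, h1, h2]
  have hinj : Function.Injective s := swapVal_inj i (i + 1)
  -- i and i+1 are not repeated entries
  have hiA : i ∉ setA T := by simp [setA, hb]
  have hi1A : i + 1 ∉ setA T := by simp [setA, hd]
  -- setA is preserved
  have hA : setA (twoRowSwap i (i + 1) T) = setA T := by
    show (T.r1.map s).filter (fun x => x ∈ T.r2.map s) = setA T
    rw [List.filter_map]
    rw [List.filter_congr (q := fun x => decide (x ∈ T.r2)) (by
      intro x hx
      simp only [Function.comp_apply, decide_eq_decide]
      by_cases hxi : x = i
      · rw [hxi, hsi]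
        simp only [List.mem_map]
        constructor
        · rintro ⟨y, hy, hyx⟩
          exfalso
          by_cases hyi : y = i
          · exact hb (hyi ▸ hy)
          · by_cases hyi1 : y = i + 1
            · rw [hyi1, hsi1] at hyx; omega
            · rw [hsne y hyi hyi1] at hyx; exact hyi1 hyx
        · intro h; exact absurd h hb
      · have hxi1 : x ≠ i + 1 := fun h => hd (h ▸ hx)
        exact Iff.trans (by rw [hsne x hxi hxi1]) (List.mem_map_of_injective hinj))]
    rw [setA]
    conv_rhs => rw [← List.map_id (T.r1.filter fun x => decide (x ∈ T.r2))]
    apply List.map_congr_left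
    intro a hha
    rw [List.mem_filter] at hha
    have ha2 : a ∈ T.r2 := by simpa using hha.2
    show s a = a
    exact hsne a (fun h => hb (h ▸ ha2)) (fun h => hd (h ▸ hha.1))
  -- setB is mapped by s
  have hB : setB (twoRowSwap i (i + 1) T) = (setB T).map s := by
    show ((T.r2.map s).zip (T.r2.map s).tail).filterMap
        (fun p => if p.1 ∈ setA (twoRowSwap i (i + 1) T) then some p.2 else none)
      = (setB T).map s
    rw [hA, ← List.map_tail, List.zip_map, List.filterMap_map, setB, List.map_filterMap]
    apply filterMap_congr_mem
    intro p hp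
    obtain ⟨p1, p2⟩ := p
    have hp1 : p1 ∈ T.r2 := (List.of_mem_zip hp).1
    have hp1i : p1 ≠ i := fun h => hb (h ▸ hp1)
    simp only [Function.comp_apply, Prod.map_apply]
    by_cases hp1i1 : p1 = i + 1
    · rw [hp1i1, hsi1]
      simp [hiA, hi1A]
    · rw [hsne p1 hp1i hp1i1]
      by_cases hmem : p1 ∈ setA T <;> simp [hmem]
  -- now prove the three components
  show HookT.mk _ _ _ = HookT.mk _ _ _
  rw [HookT.mk.injEq]
  refine ⟨?_, ?_, ?_⟩
  · -- first row
    show (T.r1.map s).filter (fun x => x ∉ setA (twoRowSwap i (i + 1) T))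
      = (T.r1.filter (fun x => x ∉ setA T)).map s
    rw [hA, List.filter_map]
    congr 1
    apply List.filter_congr
    intro x hx
    simp only [Function.comp_apply, decide_eq_decide]
    by_cases hxi : x = i
    · subst hxi; rw [hsi]; simp [hiA, hi1A]
    · have hxi1 : x ≠ i + 1 := fun h => hd (h ▸ hx)
      rw [hsne x hxi hxi1]
  · -- second row
    show (T.r2.map s).filter (fun x => x ∉ setB (twoRowSwap i (i + 1) T))
      = (T.r2.filter (fun x => x ∉ setB T)).map s
    rw [hB, List.filter_map]
    congr 1
    apply List.filter_congr
    intro x hx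
    simp only [Function.comp_apply, decide_eq_decide, not_iff_not]
    exact List.mem_map_of_injective hinj
  · -- the column
    show List.insertionSort (· ≤ ·) (setB (twoRowSwap i (i + 1) T))
      = (List.insertionSort (· ≤ ·) (setB T)).map s
    rw [hB]
    refine (fun hp h1 h2 => List.Perm.eq_of_pairwise' (r := (· ≤ ·)) h1 h2 hp) ?_ ?_ ?_
    · exact (List.perm_insertionSort _ _).trans
        ((List.perm_insertionSort (· ≤ ·) (setB T)).map s).symm
    · exact List.pairwise_insertionSort _ _
    · rw [List.pairwise_map]
      refine List.Pairwise.imp_of_mem ?_ (List.pairwise_insertionSort (· ≤ ·) (setB T))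
      intro a b hha hhb hab
      have haB : a ∈ setB T := (List.perm_insertionSort (· ≤ ·) (setB T)).mem_iff.mp hha
      have hbB : b ∈ setB T := (List.perm_insertionSort (· ≤ ·) (setB T)).mem_iff.mp hhb
      have hai : a ≠ i := fun h => hb (h ▸ mem_setB_sub haB)
      have hbi : b ≠ i := fun h => hb (h ▸ mem_setB_sub hbB)
      simp only [hs, swapVal]
      split_ifs <;> omega
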